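/- arXiv:1409.1453 — 3 statements merged into one kernel-verified Lean document; each statement's English description precedes it below -/
import Mathlib

section
/- Let A1 ∈ ℍ^{ñ×n}, B1 ∈ ℍ^{ñ×m}, C1 ∈ ℍ^{ñ×p}, D1 ∈ ℍ^{m̃×n}, E1 ∈ ℍ^{m̃×p}, F1 ∈ ℍ^{p̃×n}, G1 ∈ ℍ^{p̃×m} be given quaternion matrices. Then the minimum of r([A1 B1 C1; D1 X E1; F1 G1 Y]) over all X ∈ ℍ^{m̃×m} and Y ∈ ℍ^{p̃×p} equals r([A1 B1 C1]) + r([A1; D1; F1]) + max{ r([A1 C1; D1 E1]) − r([A1 C1]) − r([A1; D1]), r([A1 B1; F1 G1]) − r([A1 B1]) − r([A1; F1]) }; that is, some choice of (X, Y) attains this value and every choice gives a rank at least this value. -/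
open Matrix

abbrev H : Type := Quaternion ℝ

noncomputable def rk {α β : Type} [Fintype α] [Fintype β] (M : Matrix α β H) : ℕ :=
  Module.finrank Hᵐᵒᵖ (Submodule.span Hᵐᵒᵖ (Set.range fun j : β => fun i : α => M i j))

/-!
Read the columns of `[A B C; D X E; F G Y]` in `V₁ × V₂ × V₃`, one factor per block row. Its
column space `W` contains the column space `U` of `[A; D; F]`, and its projections to `V₁ × V₃`
and `V₁ × V₂` contain the column spaces `S` of `[B; G]` and `T` of `[C; E]`; conversely every
such `W` contains the column space of some completion. So the minimal rank is the minimal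
dimension of such a `W`, a question about subspaces over a division ring.

Rank–nullity along `V₁ × V₂ × V₃ → V₁ × V₂ → V₁` gives one lower bound per term of the maximum.
For the upper bound, when the `T`-term is the larger one, lift `T` first, choosing the
`V₃`-coordinates so that the lift already covers every vector of `S` whose `V₁`-component it
reaches, and then lift the rest of `S` freely. The other case follows by exchanging `V₂` and `V₃`.
-/

open Module Submodule

theorem Submodule.span_range_sum {R E ι κ : Type*} [Semiring R] [AddCommMonoid E] [Module R E]
    (f : ι ⊕ κ → E) :
    span R (Set.range f) = span R (Set.range (f ∘ Sum.inl)) ⊔ span R (Set.range (f ∘ Sum.inr)) := by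
  rw [← span_union, ← Set.Sum.elim_range, Sum.elim_comp_inl_inr]

section LinearAlgebra

variable {K M M' M'' : Type*} [DivisionRing K] [AddCommGroup M] [Module K M]
  [AddCommGroup M'] [Module K M'] [AddCommGroup M''] [Module K M'']

theorem Submodule.finrank_map_add_finrank_inf_ker [FiniteDimensional K M] (f : M →ₗ[K] M')
    (p : Submodule K M) :
    finrank K (p.map f) + finrank K ↥(p ⊓ LinearMap.ker f) = finrank K p := by
  have h := (f.domRestrict p).finrank_range_add_finrank_ker
  have e := Submodule.equivMapOfInjective p.subtype p.injective_subtype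
    (comap p.subtype (LinearMap.ker f))
  rwa [LinearMap.range_domRestrict, LinearMap.ker_domRestrict, e.finrank_eq,
    map_comap_subtype] at h

theorem Submodule.finrank_inf_comap_add_finrank_map_sup [FiniteDimensional K M]
    [FiniteDimensional K M'] (f : M →ₗ[K] M') (S : Submodule K M) (Z : Submodule K M') :
    finrank K ↥(S ⊓ Z.comap f) + finrank K ↥(S.map f ⊔ Z) = finrank K S + finrank K Z := by
  have h₁ := finrank_map_add_finrank_inf_ker f (S ⊓ Z.comap f)
  have h₂ := finrank_map_add_finrank_inf_ker f S
  have h₃ := finrank_sup_add_finrank_inf_eq (S.map f) Z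
  rw [← map_inf_eq_map_inf_comap, inf_assoc, inf_eq_right.2 (LinearMap.ker_le_comap f)] at h₁
  omega

theorem Submodule.exists_sup_eq_finrank_add_eq [FiniteDimensional K M] {p q : Submodule K M}
    (h : p ≤ q) : ∃ r ≤ q, p ⊔ r = q ∧ finrank K p + finrank K r = finrank K q := by
  obtain ⟨c, hc⟩ := p.exists_isCompl
  have hsup : p ⊔ q ⊓ c = q := by
    rw [inf_comm, ← sup_inf_assoc_of_le _ h, hc.sup_eq_top, top_inf_eq]
  have hdim := finrank_sup_add_finrank_inf_eq p (q ⊓ c)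
  rw [hsup, (hc.disjoint.mono_right inf_le_right).eq_bot, finrank_bot] at hdim
  exact ⟨q ⊓ c, inf_le_left, hsup, by omega⟩

theorem LinearMap.exists_section_map (f : M →ₗ[K] M') (p : Submodule K M) :
    ∃ g : M' →ₗ[K] M, ∀ x ∈ p.map f, g x ∈ p ∧ f (g x) = x := by
  obtain ⟨s, hs⟩ := (f.submoduleMap p).exists_rightInverse_of_surjective
    (LinearMap.range_eq_top.2 (f.submoduleMap_surjective p))
  obtain ⟨g, hg⟩ := LinearMap.exists_extend (p.subtype ∘ₗ s)
  refine ⟨g, fun x hx => ?_⟩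
  have hgx : g x = s ⟨x, hx⟩ := congr($hg ⟨x, hx⟩)
  refine ⟨hgx ▸ (s ⟨x, hx⟩).2, ?_⟩
  rw [hgx]
  exact congr(Subtype.val ($hs ⟨x, hx⟩))

theorem LinearMap.exists_sub_comp_mem (f : M →ₗ[K] M') (g : M →ₗ[K] M'') (p : Submodule K M)
    (N : Submodule K M'') (h : ∀ x ∈ p, f x = 0 → g x ∈ N) :
    ∃ k : M' →ₗ[K] M'', ∀ x ∈ p, g x - k (f x) ∈ N := by
  obtain ⟨s, hs⟩ := f.exists_section_map p
  refine ⟨g ∘ₗ s, fun x hx => ?_⟩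
  obtain ⟨hsp, hfs⟩ := hs (f x) (mem_map_of_mem hx)
  simpa using h _ (sub_mem hx hsp) (by rw [map_sub, hfs, sub_self])

theorem Submodule.exists_le_map_of_finrank_le [FiniteDimensional K M] [FiniteDimensional K M']
    {B : Submodule K M} {F : Submodule K M'} (h : finrank K F ≤ finrank K B) :
    ∃ θ : M →ₗ[K] M', F ≤ B.map θ := by
  let u : B →ₗ[K] F := (finBasis K F).equivFun.symm.toLinearMap ∘ₗ
    LinearMap.funLeft K K (Fin.castLE h) ∘ₗ (finBasis K B).equivFun.toLinearMap
  have hu : Function.Surjective u := (finBasis K F).equivFun.symm.surjective.comp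
    ((LinearMap.funLeft_surjective_of_injective K K _ (Fin.castLE_injective h)).comp
      (finBasis K B).equivFun.surjective)
  obtain ⟨θ, hθ⟩ := LinearMap.exists_extend (F.subtype ∘ₗ u)
  refine ⟨θ, fun x hx => ?_⟩
  obtain ⟨b, hb⟩ := hu ⟨x, hx⟩
  exact ⟨b, b.2, by simpa [hb] using congr($hθ b)⟩

theorem Submodule.exists_le_le_map_of_surjective [FiniteDimensional K M] [FiniteDimensional K M']
    {f : M →ₗ[K] M'} (hf : Function.Surjective f) (W : Submodule K M) (S : Submodule K M') :
    ∃ W' : Submodule K M, W ≤ W' ∧ S ≤ W'.map f ∧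
      finrank K W' + finrank K ↥(S ⊓ W.map f) ≤ finrank K W + finrank K S := by
  obtain ⟨Sc, -, hsup, hdim⟩ := exists_sup_eq_finrank_add_eq (inf_le_left : S ⊓ W.map f ≤ S)
  obtain ⟨g, hg⟩ := f.exists_rightInverse_of_surjective (LinearMap.range_eq_top.2 hf)
  refine ⟨W ⊔ Sc.map g, le_sup_left, ?_, ?_⟩
  · rw [← hsup]
    refine sup_le (inf_le_right.trans (map_mono le_sup_left)) ?_
    calc Sc = (Sc.map g).map f := by rw [← map_comp, hg, map_id]
      _ ≤ _ := map_mono le_sup_right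
  · have h₁ := finrank_add_le_finrank_add_finrank W (Sc.map g)
    have h₂ := finrank_map_le g Sc
    omega

end LinearAlgebra

section Excess

variable {K V V' E : Type*} [DivisionRing K] [AddCommGroup V] [Module K V]
  [AddCommGroup V'] [Module K V'] [AddCommGroup E] [Module K E]

noncomputable def excess (g : V' →ₗ[K] E) (Q T : Submodule K V') : ℤ :=
  finrank K ↥(Q ⊔ T) - finrank K ↥(Q.map g ⊔ T.map g) - finrank K Q

theorem excess_eq_finrank_sup_inf_ker [FiniteDimensional K V'] (g : V' →ₗ[K] E)
    (Q T : Submodule K V') :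
    excess g Q T = finrank K ↥((Q ⊔ T) ⊓ LinearMap.ker g) - finrank K ↥(Q ⊓ LinearMap.ker g) -
      finrank K (Q.map g) := by
  have h₁ := finrank_map_add_finrank_inf_ker g (Q ⊔ T)
  have h₂ := finrank_map_add_finrank_inf_ker g Q
  rw [Submodule.map_sup] at h₁
  unfold excess
  omega

theorem excess_eq_finrank_inf_comap [FiniteDimensional K V'] [FiniteDimensional K E]
    (g : V' →ₗ[K] E) (Q T : Submodule K V') :
    excess g Q T = finrank K ↥(T ⊓ (Q.map g).comap g) - finrank K ↥(Q ⊓ T) -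
      finrank K (Q.map g) := by
  have hQ : Q ≤ (Q.map g).comap g := le_comap_map g Q
  have hg : (Q ⊔ T).map g ⊔ Q.map g = Q.map g ⊔ T.map g := by
    rw [Submodule.map_sup, sup_right_comm, sup_idem]
  have h₁ := finrank_inf_comap_add_finrank_map_sup g (Q ⊔ T) (Q.map g)
  have h₂ := finrank_sup_add_finrank_inf_eq Q (T ⊓ (Q.map g).comap g)
  rw [sup_inf_assoc_of_le T hQ, hg] at h₁
  rw [← inf_assoc, inf_eq_left.2 (inf_le_left.trans hQ)] at h₂
  unfold excess
  omega

theorem finrank_add_excess_le [FiniteDimensional K V] [FiniteDimensional K V']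
    {f : V →ₗ[K] V'} {g : V' →ₗ[K] E} {U W : Submodule K V} {T : Submodule K V'}
    {R : Submodule K E} (hUW : U ≤ W) (hT : T ≤ W.map f) (hR : R ≤ (W.map f).map g) :
    finrank K R + finrank K U + excess g (U.map f) T ≤ finrank K W := by
  have hW := finrank_map_add_finrank_inf_ker f W
  have hfW := finrank_map_add_finrank_inf_ker g (W.map f)
  have hU := finrank_map_add_finrank_inf_ker f U
  have hUT := finrank_map_add_finrank_inf_ker g (U.map f ⊔ T)
  have h₁ := finrank_mono hR
  have h₂ : finrank K ↥((U.map f ⊔ T) ⊓ LinearMap.ker g) ≤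
      finrank K ↥(W.map f ⊓ LinearMap.ker g) :=
    finrank_mono (inf_le_inf_right _ (sup_le (map_mono hUW) hT))
  have h₃ : finrank K ↥(U ⊓ LinearMap.ker f) ≤ finrank K ↥(W ⊓ LinearMap.ker f) :=
    finrank_mono (inf_le_inf_right _ hUW)
  rw [Submodule.map_sup] at hUT
  unfold excess
  omega

end Excess

section Completion

variable {K V₁ V₂ V₃ : Type*} [DivisionRing K] [AddCommGroup V₁] [Module K V₁]
  [AddCommGroup V₂] [Module K V₂] [AddCommGroup V₃] [Module K V₃]

def proj₁₂ : V₁ × V₂ × V₃ →ₗ[K] V₁ × V₂ := LinearMap.id.prodMap (LinearMap.fst K V₂ V₃)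

def proj₁₃ : V₁ × V₂ × V₃ →ₗ[K] V₁ × V₃ := LinearMap.id.prodMap (LinearMap.snd K V₂ V₃)

def graph₁₂ (ψ : V₁ × V₂ →ₗ[K] V₃) : V₁ × V₂ →ₗ[K] V₁ × V₂ × V₃ :=
  (LinearMap.fst K V₁ V₂).prod ((LinearMap.snd K V₁ V₂).prod ψ)

def swap₂₃ : (V₁ × V₂ × V₃) ≃ₗ[K] V₁ × V₃ × V₂ :=
  (LinearEquiv.refl K V₁).prodCongr (LinearEquiv.prodComm K V₂ V₃)

/-- Models the column space `W` of a completion `[A B C; D X E; F G Y]`, where the columns of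
`[A; D; F]`, `[B; G]`, `[C; E]` span `U`, `S`, `T`. -/
def IsCompletion (U : Submodule K (V₁ × V₂ × V₃)) (S : Submodule K (V₁ × V₃))
    (T : Submodule K (V₁ × V₂)) (W : Submodule K (V₁ × V₂ × V₃)) : Prop :=
  U ≤ W ∧ S ≤ W.map proj₁₃ ∧ T ≤ W.map proj₁₂

noncomputable def completionBound (U : Submodule K (V₁ × V₂ × V₃)) (S : Submodule K (V₁ × V₃))
    (T : Submodule K (V₁ × V₂)) : ℤ :=
  finrank K ↥(U.map (LinearMap.fst K V₁ (V₂ × V₃)) ⊔ S.map (LinearMap.fst K V₁ V₃) ⊔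
      T.map (LinearMap.fst K V₁ V₂)) + finrank K U +
    max (excess (LinearMap.fst K V₁ V₂) (U.map proj₁₂) T)
      (excess (LinearMap.fst K V₁ V₃) (U.map proj₁₃) S)

theorem proj₁₃_surjective :
    Function.Surjective (proj₁₃ (K := K) (V₁ := V₁) (V₂ := V₂) (V₃ := V₃)) :=
  fun x => ⟨(x.1, 0, x.2), rfl⟩

theorem map_fst_map_proj₁₂ (W : Submodule K (V₁ × V₂ × V₃)) :
    (W.map proj₁₂).map (LinearMap.fst K V₁ V₂) = W.map (LinearMap.fst K V₁ (V₂ × V₃)) := by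
  rw [← map_comp]; rfl

theorem map_fst_map_proj₁₃ (W : Submodule K (V₁ × V₂ × V₃)) :
    (W.map proj₁₃).map (LinearMap.fst K V₁ V₃) = W.map (LinearMap.fst K V₁ (V₂ × V₃)) := by
  rw [← map_comp]; rfl

theorem map_proj₁₂_map_graph₁₂ (ψ : V₁ × V₂ →ₗ[K] V₃) (C : Submodule K (V₁ × V₂)) :
    (C.map (graph₁₂ ψ)).map proj₁₂ = C := by
  rw [← map_comp]; exact map_id C

theorem map_proj₁₂_map_swap₂₃ (W : Submodule K (V₁ × V₂ × V₃)) :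
    (W.map swap₂₃.toLinearMap).map proj₁₂ = W.map proj₁₃ := by
  rw [← map_comp]; rfl

theorem map_proj₁₃_map_swap₂₃ (W : Submodule K (V₁ × V₂ × V₃)) :
    (W.map swap₂₃.toLinearMap).map proj₁₃ = W.map proj₁₂ := by
  rw [← map_comp]; rfl

theorem map_fst_map_swap₂₃ (W : Submodule K (V₁ × V₂ × V₃)) :
    (W.map swap₂₃.toLinearMap).map (LinearMap.fst K V₁ (V₃ × V₂)) =
      W.map (LinearMap.fst K V₁ (V₂ × V₃)) := by
  rw [← map_comp]; rfl

theorem map_swap₂₃_map_swap₂₃ (W : Submodule K (V₁ × V₂ × V₃)) :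
    (W.map swap₂₃.toLinearMap).map swap₂₃.toLinearMap = W := by
  rw [← map_comp]; exact map_id W

theorem IsCompletion.map_swap₂₃ {U W : Submodule K (V₁ × V₂ × V₃)} {S : Submodule K (V₁ × V₃)}
    {T : Submodule K (V₁ × V₂)} (h : IsCompletion U S T W) :
    IsCompletion (U.map swap₂₃.toLinearMap) T S (W.map swap₂₃.toLinearMap) := by
  obtain ⟨hU, hS, hT⟩ := h
  rw [IsCompletion, map_proj₁₂_map_swap₂₃, map_proj₁₃_map_swap₂₃]
  exact ⟨map_mono hU, hT, hS⟩

theorem completionBound_map_swap₂₃ (U : Submodule K (V₁ × V₂ × V₃)) (S : Submodule K (V₁ × V₃))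
    (T : Submodule K (V₁ × V₂)) :
    completionBound (U.map swap₂₃.toLinearMap) T S = completionBound U S T := by
  unfold completionBound
  rw [map_fst_map_swap₂₃, map_proj₁₂_map_swap₂₃, map_proj₁₃_map_swap₂₃, sup_right_comm,
    max_comm, LinearEquiv.finrank_map_eq]

theorem exists_inf_comap_le_map_proj₁₃_sup [FiniteDimensional K V₁] [FiniteDimensional K V₂]
    (U : Submodule K (V₁ × V₂ × V₃)) (C : Submodule K (V₁ × V₂)) (S : Submodule K (V₁ × V₃)) :
    ∃ W : Submodule K (V₁ × V₂ × V₃), finrank K W ≤ finrank K C ∧ C ≤ W.map proj₁₂ ∧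
      S ⊓ (U.map (LinearMap.fst _ _ _) ⊔ C.map (LinearMap.fst _ _ _)).comap (LinearMap.fst _ _ _) ≤
        (U ⊔ W).map proj₁₃ ⊔ (U.map proj₁₃ ⊔ S) ⊓ LinearMap.ker (LinearMap.fst K V₁ V₃) := by
  -- `κ` splits `s.1` linearly as `u.1 + c.1` with `u ∈ U`, `c ∈ C`; `s - π₁₃ u` then differs from
  -- `(c.1, ψ c)` only in the `V₃`-coordinate, and `ψ` is chosen to make that difference lie in
  -- `π₁₃U + S`, which it does already when `c = 0`.
  obtain ⟨κ, hκ⟩ := ((LinearMap.fst K V₁ (V₂ × V₃)).coprod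
    (LinearMap.fst K V₁ V₂)).exists_section_map (U.prod C)
  rw [LinearMap.map_coprod_prod] at hκ
  let c : V₁ × V₃ →ₗ[K] V₁ × V₂ := LinearMap.snd _ _ _ ∘ₗ κ ∘ₗ LinearMap.fst _ _ _
  let τ : V₁ × V₃ →ₗ[K] V₃ := LinearMap.snd _ _ _ - (LinearMap.snd _ _ _ ∘ₗ LinearMap.snd _ _ _ ∘ₗ
    LinearMap.fst _ _ _) ∘ₗ κ ∘ₗ LinearMap.fst _ _ _
  have hdecomp : ∀ s ∈ S ⊓ (U.map (LinearMap.fst _ _ _) ⊔ C.map (LinearMap.fst _ _ _)).comap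
      (LinearMap.fst _ _ _), (κ s.1).1 ∈ U ∧ c s ∈ C ∧ (κ s.1).1.1 + (c s).1 = s.1 := by
    intro s hs
    obtain ⟨⟨hu, hc⟩, h⟩ := hκ s.1 hs.2
    exact ⟨hu, hc, h⟩
  obtain ⟨ψ, hψ⟩ := c.exists_sub_comp_mem τ _ (comap (LinearMap.inr K V₁ V₃)
      ((U.map proj₁₃ ⊔ S) ⊓ LinearMap.ker (LinearMap.fst K V₁ V₃))) (by
    intro s hs hc
    obtain ⟨hu, -, h⟩ := hdecomp s hs
    rw [hc, Prod.fst_zero, add_zero] at h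
    have hτ : LinearMap.inr K V₁ V₃ (τ s) = s - proj₁₃ (K := K) (κ s.1).1 :=
      Prod.ext (by simp [proj₁₃, h]) (by simp [τ, proj₁₃])
    rw [mem_comap, hτ]
    refine ⟨sub_mem (mem_sup_right hs.1) (mem_sup_left (mem_map_of_mem hu)), ?_⟩
    simp [proj₁₃, h])
  refine ⟨C.map (graph₁₂ ψ), finrank_map_le _ _, (map_proj₁₂_map_graph₁₂ ψ C).ge, ?_⟩
  intro s hs
  obtain ⟨hu, hc, h⟩ := hdecomp s hs
  have hs' : s = proj₁₃ (K := K) ((κ s.1).1 + graph₁₂ ψ (c s)) +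
      LinearMap.inr K V₁ V₃ (τ s - ψ (c s)) :=
    Prod.ext (by simp [proj₁₃, graph₁₂, h]) (by simp [proj₁₃, graph₁₂, τ, c])
  rw [hs']
  exact add_mem (mem_sup_left (mem_map_of_mem (add_mem (mem_sup_left hu)
    (mem_sup_right (mem_map_of_mem hc))))) (mem_sup_right (hψ s hs))

variable [FiniteDimensional K V₁] [FiniteDimensional K V₂] [FiniteDimensional K V₃]

theorem IsCompletion.completionBound_le {U W : Submodule K (V₁ × V₂ × V₃)}
    {S : Submodule K (V₁ × V₃)} {T : Submodule K (V₁ × V₂)} (h : IsCompletion U S T W) :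
    completionBound U S T ≤ finrank K W := by
  obtain ⟨hU, hS, hT⟩ := h
  have hR : U.map (LinearMap.fst K V₁ (V₂ × V₃)) ⊔ S.map (LinearMap.fst K V₁ V₃) ⊔
      T.map (LinearMap.fst K V₁ V₂) ≤ W.map (LinearMap.fst K V₁ (V₂ × V₃)) := by
    refine sup_le (sup_le (map_mono hU) ?_) ?_
    · exact (map_mono hS).trans (map_fst_map_proj₁₃ W).le
    · exact (map_mono hT).trans (map_fst_map_proj₁₂ W).le
  have h₁₂ := finrank_add_excess_le hU hT (hR.trans (map_fst_map_proj₁₂ W).ge)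
  have h₁₃ := finrank_add_excess_le hU hS (hR.trans (map_fst_map_proj₁₃ W).ge)
  unfold completionBound
  omega

theorem exists_le_map_proj₁₃_sup (U : Submodule K (V₁ × V₂ × V₃)) {B : Submodule K (V₁ × V₂)}
    {N : Submodule K (V₁ × V₃)}
    (hB : B.map (LinearMap.fst K V₁ V₂) ≤ U.map (LinearMap.fst K V₁ (V₂ × V₃)))
    (hN : N ≤ LinearMap.ker (LinearMap.fst K V₁ V₃))
    (hdim : finrank K N ≤ finrank K ↥(U.map proj₁₃ ⊓ N) + finrank K B) :
    ∃ W : Submodule K (V₁ × V₂ × V₃), finrank K W ≤ finrank K B ∧ B ≤ W.map proj₁₂ ∧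
      N ≤ (U ⊔ W).map proj₁₃ := by
  obtain ⟨F, -, hsup, hF⟩ := exists_sup_eq_finrank_add_eq (inf_le_right : U.map proj₁₃ ⊓ N ≤ N)
  obtain ⟨θ, hθ⟩ := exists_le_map_of_finrank_le (B := B) (F := F) (by omega)
  obtain ⟨η, hη⟩ := (LinearMap.fst K V₁ (V₂ × V₃)).exists_section_map U
  -- `b` is lifted to `η b.1 ∈ U` shifted by `θ b ∈ F` in the `V₃`-coordinate, so the projections
  -- of the lifts of `B` reach all of `F` modulo `π₁₃U`.
  let ψ : V₁ × V₂ →ₗ[K] V₃ := LinearMap.snd K V₂ V₃ ∘ₗ LinearMap.snd K V₁ (V₂ × V₃) ∘ₗ η ∘ₗ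
    LinearMap.fst K V₁ V₂ + LinearMap.snd K V₁ V₃ ∘ₗ θ
  refine ⟨B.map (graph₁₂ ψ), finrank_map_le _ _, (map_proj₁₂_map_graph₁₂ ψ B).ge, ?_⟩
  rw [← hsup]
  refine sup_le (inf_le_left.trans (map_mono le_sup_left)) ?_
  intro x hx
  obtain ⟨b, hb, rfl⟩ := hθ hx
  obtain ⟨hηU, hη₁⟩ := hη b.1 (hB (mem_map_of_mem hb))
  have hθ₁ : (θ b).1 = 0 := hN (hsup ▸ mem_sup_right hx : θ b ∈ N)
  refine ⟨graph₁₂ ψ b - η b.1,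
    sub_mem (mem_sup_right (mem_map_of_mem hb)) (mem_sup_left hηU), Prod.ext ?_ ?_⟩
  · change b.1 - (η b.1).1 = (θ b).1
    rw [hθ₁, sub_eq_zero]
    exact hη₁.symm
  · simp [graph₁₂, proj₁₃, ψ]

theorem exists_lift_of_excess_le {U : Submodule K (V₁ × V₂ × V₃)} {S : Submodule K (V₁ × V₃)}
    {T : Submodule K (V₁ × V₂)}
    (h : excess (LinearMap.fst K V₁ V₃) (U.map proj₁₃) S ≤
      excess (LinearMap.fst K V₁ V₂) (U.map proj₁₂) T) :
    ∃ W₀ : Submodule K (V₁ × V₂ × V₃), U ≤ W₀ ∧ T ≤ W₀.map proj₁₂ ∧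
      finrank K W₀ + finrank K ↥(U.map proj₁₂ ⊓ T) ≤ finrank K U + finrank K T ∧
      S ⊓ (U.map (LinearMap.fst _ _ _) ⊔ T.map (LinearMap.fst _ _ _)).comap (LinearMap.fst _ _ _) ≤
        W₀.map proj₁₃ := by
  rw [excess_eq_finrank_sup_inf_ker, map_fst_map_proj₁₃, excess_eq_finrank_inf_comap,
    map_fst_map_proj₁₂] at h
  -- Split `T = (π₁₂U ⊓ T) ⊕ B ⊕ C` with `(π₁₂U ⊓ T) ⊕ B = T ⊓ π₁⁻¹(π₁U)`. The lift of `B` fills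
  -- the kernel `N` of `π₁₃U + S → V₁` (the hypothesis says `B` is large enough), the lift of `C`
  -- handles the `V₁`-directions outside `π₁U`.
  set P := U.map (LinearMap.fst K V₁ (V₂ × V₃))
  set Tπ := T ⊓ P.comap (LinearMap.fst K V₁ V₂)
  have hTa : U.map proj₁₂ ⊓ T ≤ Tπ := fun t ht =>
    ⟨ht.2, (map_fst_map_proj₁₂ U).le (mem_map_of_mem ht.1)⟩
  obtain ⟨B, hBTπ, hBsup, hB⟩ := exists_sup_eq_finrank_add_eq hTa
  obtain ⟨C, -, hCsup, hC⟩ := exists_sup_eq_finrank_add_eq (show Tπ ≤ T from inf_le_left)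
  set N := (U.map proj₁₃ ⊔ S) ⊓ LinearMap.ker (LinearMap.fst K V₁ V₃)
  have hUN : U.map proj₁₃ ⊓ N = U.map proj₁₃ ⊓ LinearMap.ker (LinearMap.fst K V₁ V₃) := by
    rw [← inf_assoc, inf_sup_self]
  have hN : finrank K N ≤ finrank K ↥(U.map proj₁₃ ⊓ N) + finrank K B := by
    rw [hUN]
    omega
  obtain ⟨WB, hWB, hBWB, hNWB⟩ := exists_le_map_proj₁₃_sup U
    (map_le_iff_le_comap.2 (hBTπ.trans inf_le_right)) inf_le_right hN
  obtain ⟨WC, hWC, hCWC, hSWC⟩ := exists_inf_comap_le_map_proj₁₃_sup U C S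
  refine ⟨U ⊔ WB ⊔ WC, le_sup_left.trans le_sup_left, ?_, ?_, ?_⟩
  · rw [← hCsup, ← hBsup]
    exact sup_le (sup_le (inf_le_left.trans (map_mono (le_sup_left.trans le_sup_left)))
      (hBWB.trans (map_mono (le_sup_right.trans le_sup_left))))
      (hCWC.trans (map_mono le_sup_right))
  · have h₁ := finrank_add_le_finrank_add_finrank (U ⊔ WB) WC
    have h₂ := finrank_add_le_finrank_add_finrank U WB
    omega
  · have hT : T.map (LinearMap.fst K V₁ V₂) ≤ P ⊔ C.map (LinearMap.fst K V₁ V₂) := by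
      rw [← hCsup, Submodule.map_sup]
      exact sup_le_sup_right (map_le_iff_le_comap.2 inf_le_right) _
    refine (inf_le_inf_left _ (comap_mono (sup_le le_sup_left hT))).trans
      (hSWC.trans (sup_le ?_ ?_))
    · exact map_mono (sup_le_sup_right le_sup_left _)
    · exact hNWB.trans (map_mono le_sup_left)

theorem exists_isCompletion_of_excess_le {U : Submodule K (V₁ × V₂ × V₃)}
    {S : Submodule K (V₁ × V₃)} {T : Submodule K (V₁ × V₂)}
    (h : excess (LinearMap.fst K V₁ V₃) (U.map proj₁₃) S ≤
      excess (LinearMap.fst K V₁ V₂) (U.map proj₁₂) T) :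
    ∃ W, IsCompletion U S T W ∧ finrank K W ≤ completionBound U S T := by
  obtain ⟨W₀, hUW₀, hTW₀, hW₀, hSW₀⟩ := exists_lift_of_excess_le h
  obtain ⟨W, hW₀W, hSW, hW⟩ := exists_le_le_map_of_surjective proj₁₃_surjective W₀ S
  refine ⟨W, ⟨hUW₀.trans hW₀W, hSW, hTW₀.trans (map_mono hW₀W)⟩, ?_⟩
  have h₁ := finrank_mono (inf_le_inf_left S hSW₀)
  rw [← inf_assoc, inf_idem] at h₁
  have h₂ := finrank_inf_comap_add_finrank_map_sup (LinearMap.fst K V₁ V₃) S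
    (U.map (LinearMap.fst _ _ _) ⊔ T.map (LinearMap.fst _ _ _))
  rw [sup_left_comm, ← sup_assoc] at h₂
  have h₃ := finrank_sup_add_finrank_inf_eq (U.map proj₁₂) T
  unfold completionBound excess
  rw [map_fst_map_proj₁₂]
  omega

theorem exists_isCompletion_finrank_eq (U : Submodule K (V₁ × V₂ × V₃))
    (S : Submodule K (V₁ × V₃)) (T : Submodule K (V₁ × V₂)) :
    ∃ W, IsCompletion U S T W ∧ finrank K W = completionBound U S T := by
  suffices ∃ W, IsCompletion U S T W ∧ finrank K W ≤ completionBound U S T by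
    obtain ⟨W, hW, hle⟩ := this
    exact ⟨W, hW, le_antisymm hle hW.completionBound_le⟩
  rcases le_total (excess (LinearMap.fst K V₁ V₃) (U.map proj₁₃) S)
    (excess (LinearMap.fst K V₁ V₂) (U.map proj₁₂) T) with h | h
  · exact exists_isCompletion_of_excess_le h
  · rw [← map_proj₁₂_map_swap₂₃, ← map_proj₁₃_map_swap₂₃] at h
    obtain ⟨W, hW, hle⟩ := exists_isCompletion_of_excess_le h
    refine ⟨W.map swap₂₃.toLinearMap, map_swap₂₃_map_swap₂₃ U ▸ hW.map_swap₂₃, ?_⟩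
    rwa [LinearEquiv.finrank_map_eq, ← completionBound_map_swap₂₃]

end Completion

noncomputable instance : Module.Finite Hᵐᵒᵖ H :=
  Module.Finite.of_surjective (LinearMap.toSpanSingleton Hᵐᵒᵖ H 1) fun x =>
    ⟨MulOpposite.op x, by simp⟩

section Blocks

variable {α β γ ι κ : Type}

noncomputable def colSpace (M : Matrix α ι H) : Submodule Hᵐᵒᵖ (α → H) := span Hᵐᵒᵖ (Set.range Mᵀ)

noncomputable def colPair (M : Matrix α ι H) (N : Matrix β ι H) :
    Submodule Hᵐᵒᵖ ((α → H) × (β → H)) :=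
  span Hᵐᵒᵖ (Set.range fun j => (Mᵀ j, Nᵀ j))

noncomputable def colTriple (M : Matrix α ι H) (N : Matrix β ι H) (P : Matrix γ ι H) :
    Submodule Hᵐᵒᵖ ((α → H) × (β → H) × (γ → H)) :=
  span Hᵐᵒᵖ (Set.range fun j => (Mᵀ j, Nᵀ j, Pᵀ j))

theorem colSpace_fromCols (M : Matrix α ι H) (N : Matrix α κ H) :
    colSpace (fromCols M N) = colSpace M ⊔ colSpace N :=
  span_range_sum _

theorem colPair_fromCols (M : Matrix α ι H) (N : Matrix β ι H) (M' : Matrix α κ H)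
    (N' : Matrix β κ H) :
    colPair (fromCols M M') (fromCols N N') = colPair M N ⊔ colPair M' N' :=
  span_range_sum _

theorem colTriple_fromCols (M : Matrix α ι H) (N : Matrix β ι H) (P : Matrix γ ι H)
    (M' : Matrix α κ H) (N' : Matrix β κ H) (P' : Matrix γ κ H) :
    colTriple (fromCols M M') (fromCols N N') (fromCols P P') =
      colTriple M N P ⊔ colTriple M' N' P' :=
  span_range_sum _

theorem map_fst_colPair (M : Matrix α ι H) (N : Matrix β ι H) :
    (colPair M N).map (LinearMap.fst _ _ _) = colSpace M := by
  rw [colPair, map_span, ← Set.range_comp]; rfl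

theorem map_fst_colTriple (M : Matrix α ι H) (N : Matrix β ι H) (P : Matrix γ ι H) :
    (colTriple M N P).map (LinearMap.fst _ _ _) = colSpace M := by
  rw [colTriple, map_span, ← Set.range_comp]; rfl

theorem map_proj₁₂_colTriple (M : Matrix α ι H) (N : Matrix β ι H) (P : Matrix γ ι H) :
    (colTriple M N P).map proj₁₂ = colPair M N := by
  rw [colTriple, map_span, ← Set.range_comp]; rfl

theorem map_proj₁₃_colTriple (M : Matrix α ι H) (N : Matrix β ι H) (P : Matrix γ ι H) :
    (colTriple M N P).map proj₁₃ = colPair M P := by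
  rw [colTriple, map_span, ← Set.range_comp]; rfl

theorem exists_colTriple_le_of_le_map_proj₁₃ {M : Matrix α ι H} {P : Matrix γ ι H}
    {W : Submodule Hᵐᵒᵖ ((α → H) × (β → H) × (γ → H))} (h : colPair M P ≤ W.map proj₁₃) :
    ∃ N : Matrix β ι H, colTriple M N P ≤ W := by
  choose w hwW hw using fun j => h (subset_span ⟨j, rfl⟩)
  refine ⟨Matrix.of fun i j => (w j).2.1 i, span_le.2 ?_⟩
  rintro _ ⟨j, rfl⟩
  convert hwW j using 1
  exact Prod.ext (congrArg Prod.fst (hw j)).symm (Prod.ext rfl (congrArg Prod.snd (hw j)).symm)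

theorem exists_colTriple_le_of_le_map_proj₁₂ {M : Matrix α ι H} {N : Matrix β ι H}
    {W : Submodule Hᵐᵒᵖ ((α → H) × (β → H) × (γ → H))} (h : colPair M N ≤ W.map proj₁₂) :
    ∃ P : Matrix γ ι H, colTriple M N P ≤ W := by
  choose w hwW hw using fun j => h (subset_span ⟨j, rfl⟩)
  refine ⟨Matrix.of fun i j => (w j).2.2 i, span_le.2 ?_⟩
  rintro _ ⟨j, rfl⟩
  convert hwW j using 1
  exact Prod.ext (congrArg Prod.fst (hw j)).symm (Prod.ext (congrArg Prod.snd (hw j)).symm rfl)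

theorem isCompletion_colTriple_sup (A : Matrix α ι H) (B : Matrix α κ H)
    {ν : Type} (C : Matrix α ν H) (D : Matrix β ι H) (E : Matrix β ν H) (F : Matrix γ ι H)
    (G : Matrix γ κ H) (X : Matrix β κ H) (Y : Matrix γ ν H) :
    IsCompletion (colTriple A D F) (colPair B G) (colPair C E)
      (colTriple A D F ⊔ colTriple B X G ⊔ colTriple C E Y) :=
  ⟨le_sup_left.trans le_sup_left,
    (map_proj₁₃_colTriple B X G).ge.trans (map_mono (le_sup_right.trans le_sup_left)),
    (map_proj₁₂_colTriple C E Y).ge.trans (map_mono le_sup_right)⟩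

variable [Fintype α] [Fintype β] [Fintype γ] [Fintype ι] [Fintype κ]

theorem rk_fromCols (M : Matrix α ι H) (N : Matrix α κ H) :
    rk (fromCols M N) = finrank Hᵐᵒᵖ ↥(colSpace M ⊔ colSpace N) := by
  rw [← colSpace_fromCols]; rfl

theorem rk_fromRows (M : Matrix α ι H) (N : Matrix β ι H) :
    rk (fromRows M N) = finrank Hᵐᵒᵖ (colPair M N) := by
  rw [rk, ← LinearEquiv.finrank_map_eq (LinearEquiv.sumArrowLequivProdArrow α β Hᵐᵒᵖ H),
    map_span, ← Set.range_comp]; rfl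

theorem rk_fromRows_fromRows (M : Matrix α ι H) (N : Matrix β ι H) (P : Matrix γ ι H) :
    rk (fromRows (fromRows M N) P) = finrank Hᵐᵒᵖ (colTriple M N P) := by
  let e := (LinearEquiv.sumArrowLequivProdArrow (α ⊕ β) γ Hᵐᵒᵖ H).trans
    (((LinearEquiv.sumArrowLequivProdArrow α β Hᵐᵒᵖ H).prodCongr (LinearEquiv.refl _ _)).trans
      (LinearEquiv.prodAssoc Hᵐᵒᵖ _ _ _))
  rw [rk, ← LinearEquiv.finrank_map_eq e, map_span, ← Set.range_comp]; rfl

theorem completionBound_colTriple {ν : Type} [Fintype ν] (A : Matrix α ι H) (B : Matrix α κ H)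
    (C : Matrix α ν H) (D : Matrix β ι H) (E : Matrix β ν H) (F : Matrix γ ι H)
    (G : Matrix γ κ H) :
    completionBound (colTriple A D F) (colPair B G) (colPair C E) =
      (rk (fromCols (fromCols A B) C) : ℤ) + rk (fromRows (fromRows A D) F) +
        max ((rk (fromRows (fromCols A C) (fromCols D E)) : ℤ) - rk (fromCols A C) -
            rk (fromRows A D))
          ((rk (fromRows (fromCols A B) (fromCols F G)) : ℤ) - rk (fromCols A B) -
            rk (fromRows A F)) := by
  rw [completionBound, excess, excess, map_fst_colTriple, map_proj₁₂_colTriple,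
    map_proj₁₃_colTriple, map_fst_colPair, map_fst_colPair, map_fst_colPair, map_fst_colPair,
    rk_fromCols, rk_fromCols, rk_fromCols, colSpace_fromCols, rk_fromRows_fromRows, rk_fromRows,
    rk_fromRows, rk_fromRows, rk_fromRows, colPair_fromCols, colPair_fromCols]

end Blocks

theorem stmt_3 {n' m' p' n m p : ℕ}
    (A1 : Matrix (Fin n') (Fin n) H) (B1 : Matrix (Fin n') (Fin m) H)
    (C1 : Matrix (Fin n') (Fin p) H) (D1 : Matrix (Fin m') (Fin n) H)
    (E1 : Matrix (Fin m') (Fin p) H) (F1 : Matrix (Fin p') (Fin n) H)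
    (G1 : Matrix (Fin p') (Fin m) H) :
    (∃ (X : Matrix (Fin m') (Fin m) H) (Y : Matrix (Fin p') (Fin p) H), (rk (Matrix.fromRows (Matrix.fromRows (Matrix.fromCols (Matrix.fromCols A1 B1) C1) (Matrix.fromCols (Matrix.fromCols D1 X) E1)) (Matrix.fromCols (Matrix.fromCols F1 G1) Y)) : ℤ) = (((rk (Matrix.fromCols (Matrix.fromCols A1 B1) C1) : ℤ)) + ((rk (Matrix.fromRows (Matrix.fromRows A1 D1) F1) : ℤ)) + max (((rk (Matrix.fromRows (Matrix.fromCols A1 C1) (Matrix.fromCols D1 E1)) : ℤ)) - ((rk (Matrix.fromCols A1 C1) : ℤ)) - ((rk (Matrix.fromRows A1 D1) : ℤ))) (((rk (Matrix.fromRows (Matrix.fromCols A1 B1) (Matrix.fromCols F1 G1)) : ℤ)) - ((rk (Matrix.fromCols A1 B1) : ℤ)) - ((rk (Matrix.fromRows A1 F1) : ℤ))))) ∧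
    (∀ (X : Matrix (Fin m') (Fin m) H) (Y : Matrix (Fin p') (Fin p) H), (((rk (Matrix.fromCols (Matrix.fromCols A1 B1) C1) : ℤ)) + ((rk (Matrix.fromRows (Matrix.fromRows A1 D1) F1) : ℤ)) + max (((rk (Matrix.fromRows (Matrix.fromCols A1 C1) (Matrix.fromCols D1 E1)) : ℤ)) - ((rk (Matrix.fromCols A1 C1) : ℤ)) - ((rk (Matrix.fromRows A1 D1) : ℤ))) (((rk (Matrix.fromRows (Matrix.fromCols A1 B1) (Matrix.fromCols F1 G1)) : ℤ)) - ((rk (Matrix.fromCols A1 B1) : ℤ)) - ((rk (Matrix.fromRows A1 F1) : ℤ)))) ≤ (rk (Matrix.fromRows (Matrix.fromRows (Matrix.fromCols (Matrix.fromCols A1 B1) C1) (Matrix.fromCols (Matrix.fromCols D1 X) E1)) (Matrix.fromCols (Matrix.fromCols F1 G1) Y)) : ℤ)) := by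
  have hrk : ∀ X Y, rk (fromRows (fromRows (fromCols (fromCols A1 B1) C1)
      (fromCols (fromCols D1 X) E1)) (fromCols (fromCols F1 G1) Y)) =
      finrank Hᵐᵒᵖ ↥(colTriple A1 D1 F1 ⊔ colTriple B1 X G1 ⊔ colTriple C1 E1 Y) := fun X Y => by
    rw [rk_fromRows_fromRows, colTriple_fromCols, colTriple_fromCols]
  have hlower : ∀ X Y, completionBound (colTriple A1 D1 F1) (colPair B1 G1) (colPair C1 E1) ≤
      finrank Hᵐᵒᵖ ↥(colTriple A1 D1 F1 ⊔ colTriple B1 X G1 ⊔ colTriple C1 E1 Y) := fun X Y =>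
    (isCompletion_colTriple_sup A1 B1 C1 D1 E1 F1 G1 X Y).completionBound_le
  rw [← completionBound_colTriple]
  refine ⟨?_, fun X Y => hrk X Y ▸ hlower X Y⟩
  obtain ⟨W, hW, hWrank⟩ :=
    exists_isCompletion_finrank_eq (colTriple A1 D1 F1) (colPair B1 G1) (colPair C1 E1)
  obtain ⟨X, hX⟩ := exists_colTriple_le_of_le_map_proj₁₃ hW.2.1
  obtain ⟨Y, hY⟩ := exists_colTriple_le_of_le_map_proj₁₂ hW.2.2
  refine ⟨X, Y, le_antisymm ?_ (hrk X Y ▸ hlower X Y)⟩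
  rw [hrk, ← hWrank]
  exact_mod_cast finrank_mono (sup_le (sup_le hW.1 hX) hY)
end

section
/- Let A1 ∈ ℍ^{p×q}, B1 ∈ ℍ^{p×m}, D1 ∈ ℍ^{n×q} be given quaternion matrices. Then the maximum of r([Y D1; B1 A1]) over all Y ∈ ℍ^{n×m} equals min{ n + r([B1 A1]), m + r([D1; A1]) }, and the minimum of r([Y D1; B1 A1]) over all Y ∈ ℍ^{n×m} equals r([B1 A1]) + r([D1; A1]) − r(A1); in each case the extremal value is attained by some Y and bounds the rank for every Y. -/
/-!
In the right `ℍ`-space `ℍ^(n+p)` let `T` be the column space of `[D1; A1]`, `U` the vectors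
whose lower block vanishes, and `c j = (0, b j)` the columns of `[0; B1]`. The columns of `[Y D1; B1 A1]` then span `T + span (c + u)` with `u j = (y j, 0)`, and as
`Y` varies, `u` ranges over all families in `U`. For such `u`, the sum of `T + span (c + u)` and
`T + U` is `T + U + span c`, and their intersection contains `T`; this gives
`dim (T + span (c + u)) + dim (T + U) ≥ dim (T + U + span c) + dim T`, with equality when every
`c j + u j` lies in `T + E` for a complement `E` of `T + U`. Trivially
`dim (T + span (c + u)) ≤ min (dim T + m, dim (T + U + span c))`; choosing the `u j` one at a time,
each so that `c j + u j` leaves the span built so far whenever some choice does, attains this bound.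
Finally `dim (T + U) = n + r(A1)` and `dim (T + U + span c) = n + r([B1 A1])`.
-/

open Matrix

open Module Submodule LinearMap

section Perturbation

variable {K X : Type*} [DivisionRing K] [AddCommGroup X] [Module K X]
  {T U : Submodule K X} {m : ℕ}

theorem span_range_add_sup_of_mem {c u : Fin m → X} (hu : ∀ j, u j ∈ U) :
    span K (Set.range (c + u)) ⊔ U = span K (Set.range c) ⊔ U := by
  apply le_antisymm <;> refine sup_le ?_ le_sup_right <;> rw [span_le] <;> rintro _ ⟨j, rfl⟩
  · exact add_mem (mem_sup_left (subset_span ⟨j, rfl⟩)) (mem_sup_right (hu j))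
  · rw [← add_sub_cancel_right (c j) (u j)]
    exact sub_mem (mem_sup_left (subset_span ⟨j, rfl⟩)) (mem_sup_right (hu j))

theorem sup_span_range_add_sup_of_mem {c u : Fin m → X} (hu : ∀ j, u j ∈ U) :
    T ⊔ span K (Set.range (c + u)) ⊔ (T ⊔ U) = T ⊔ U ⊔ span K (Set.range c) := by
  rw [sup_sup_sup_comm, sup_idem, span_range_add_sup_of_mem hu, sup_comm _ U, sup_assoc]

theorem sup_span_range_cons (T : Submodule K X) (y : X) (f : Fin m → X) :
    T ⊔ span K (Set.range (Fin.cons y f : Fin (m + 1) → X)) =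
      T ⊔ span K (Set.range f) ⊔ K ∙ y := by
  rw [Fin.range_cons, span_insert, sup_left_comm, sup_comm, sup_assoc]

theorem exists_sup_span_range_add_inf_eq (T U : Submodule K X) (c : Fin m → X) :
    ∃ u : Fin m → X, (∀ j, u j ∈ U) ∧
      (T ⊔ span K (Set.range (c + u))) ⊓ (T ⊔ U) = T := by
  obtain ⟨E, hE⟩ := Submodule.exists_isCompl (T ⊔ U)
  have hdecomp : ∀ j, ∃ u ∈ U, c j + u ∈ T ⊔ E := fun j => by
    obtain ⟨a, ha, e, he, hc⟩ := mem_sup.mp (hE.codisjoint.eq_top ▸ mem_top : c j ∈ (T ⊔ U) ⊔ E)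
    obtain ⟨t, ht, v, hv, rfl⟩ := mem_sup.mp ha
    refine ⟨-v, neg_mem hv, ?_⟩
    rw [← hc, show t + v + e + -v = t + e by abel]
    exact add_mem (mem_sup_left ht) (mem_sup_right he)
  choose u hu hcu using hdecomp
  refine ⟨u, hu, le_antisymm ?_ (le_inf le_sup_left le_sup_left)⟩
  have hS : T ⊔ span K (Set.range (c + u)) ≤ T ⊔ E :=
    sup_le le_sup_left (span_le.mpr (by rintro _ ⟨j, rfl⟩; exact hcu j))
  calc (T ⊔ span K (Set.range (c + u))) ⊓ (T ⊔ U) ≤ (T ⊔ E) ⊓ (T ⊔ U) := inf_le_inf_right _ hS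
    _ = T := by rw [sup_inf_assoc_of_le _ le_sup_left, inf_comm, hE.inf_eq_bot, sup_bot_eq]

variable [FiniteDimensional K X]

theorem finrank_sup_span_range_add_le {c u : Fin m → X} (hu : ∀ j, u j ∈ U) :
    finrank K ↥(T ⊔ span K (Set.range (c + u))) ≤
      min (finrank K T + m) (finrank K ↥(T ⊔ U ⊔ span K (Set.range c))) := by
  refine le_min ?_ ?_
  · calc finrank K ↥(T ⊔ span K (Set.range (c + u)))
        ≤ finrank K T + finrank K (span K (Set.range (c + u))) :=
          finrank_add_le_finrank_add_finrank _ _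
      _ ≤ finrank K T + m := by
          gcongr; simpa [Set.finrank] using finrank_range_le_card (R := K) (c + u)
  · rw [← sup_span_range_add_sup_of_mem hu]
    exact finrank_mono le_sup_left

theorem finrank_sup_span_range_add_add_finrank_sup {c u : Fin m → X} (hu : ∀ j, u j ∈ U) :
    finrank K ↥(T ⊔ span K (Set.range (c + u))) + finrank K ↥(T ⊔ U) =
      finrank K ↥(T ⊔ U ⊔ span K (Set.range c)) +
        finrank K ↥((T ⊔ span K (Set.range (c + u))) ⊓ (T ⊔ U)) := by
  rw [← finrank_sup_add_finrank_inf_eq, sup_span_range_add_sup_of_mem hu]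

theorem finrank_sup_add_finrank_le_finrank_sup_span_range_add {c u : Fin m → X}
    (hu : ∀ j, u j ∈ U) :
    finrank K ↥(T ⊔ U ⊔ span K (Set.range c)) + finrank K T ≤
      finrank K ↥(T ⊔ span K (Set.range (c + u))) + finrank K ↥(T ⊔ U) := by
  rw [finrank_sup_span_range_add_add_finrank_sup hu]
  exact Nat.add_le_add_left (finrank_mono (le_inf le_sup_left le_sup_left)) _

theorem exists_min_le_finrank_sup_span_range_add (T U : Submodule K X) (c : Fin m → X) :
    ∃ u : Fin m → X, (∀ j, u j ∈ U) ∧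
      min (finrank K T + m) (finrank K ↥(T ⊔ U ⊔ span K (Set.range c))) ≤
        finrank K ↥(T ⊔ span K (Set.range (c + u))) := by
  induction m with
  | zero => exact ⟨0, fun _ => zero_mem U, (min_le_left _ _).trans (finrank_mono le_sup_left)⟩
  | succ m ih =>
    obtain ⟨x, c, rfl⟩ : ∃ x c', c = Fin.cons x c' := ⟨_, _, (Fin.cons_self_tail c).symm⟩
    obtain ⟨u, hu, hS'⟩ := ih c
    set S' := T ⊔ span K (Set.range (c + u))
    have hcons : ∀ v, (Fin.cons x c : Fin (m + 1) → X) + Fin.cons v u = Fin.cons (x + v) (c + u) :=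
      fun v => by ext j; cases j using Fin.cases <;> simp
    have hM : finrank K ↥(T ⊔ U ⊔ span K (Set.range (Fin.cons x c : Fin (m + 1) → X))) ≤
        finrank K ↥(T ⊔ U ⊔ span K (Set.range c)) + 1 := by
      rw [sup_span_range_cons]
      refine (finrank_add_le_finrank_add_finrank _ _).trans (Nat.add_le_add_left ?_ _)
      simpa using finrank_span_le_card (R := K) ({x} : Set X)
    by_cases hnew : ∃ v ∈ U, x + v ∉ S'
    · obtain ⟨v, hv, hvS⟩ := hnew
      refine ⟨Fin.cons v u, Fin.cases hv hu, ?_⟩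
      rw [hcons, sup_span_range_cons T, finrank_sup_span_singleton hvS]
      omega
    · push Not at hnew
      have hx : x ∈ S' := by simpa using hnew 0 (zero_mem U)
      have hUS : U ≤ S' := fun w hw => by simpa using sub_mem (hnew w hw) hx
      have hu0 : ∀ j, (Fin.cons 0 u : Fin (m + 1) → X) j ∈ U := Fin.cases (zero_mem U) hu
      refine ⟨Fin.cons 0 u, hu0, (min_le_right _ _).trans (finrank_mono ?_)⟩
      rw [← sup_span_range_add_sup_of_mem hu0, hcons, sup_span_range_cons, add_zero,
        sup_eq_left.mpr ((span_singleton_le_iff_mem x S').mpr hx)]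
      exact sup_le le_rfl (sup_le le_sup_left hUS)

theorem exists_finrank_sup_span_range_add_eq_min (T U : Submodule K X) (c : Fin m → X) :
    ∃ u : Fin m → X, (∀ j, u j ∈ U) ∧ finrank K ↥(T ⊔ span K (Set.range (c + u))) =
      min (finrank K T + m) (finrank K ↥(T ⊔ U ⊔ span K (Set.range c))) := by
  obtain ⟨u, hu, hle⟩ := exists_min_le_finrank_sup_span_range_add T U c
  exact ⟨u, hu, (finrank_sup_span_range_add_le hu).antisymm hle⟩

theorem exists_finrank_sup_span_range_add_add_finrank_sup_eq (T U : Submodule K X)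
    (c : Fin m → X) :
    ∃ u : Fin m → X, (∀ j, u j ∈ U) ∧
      finrank K ↥(T ⊔ span K (Set.range (c + u))) + finrank K ↥(T ⊔ U) =
        finrank K ↥(T ⊔ U ⊔ span K (Set.range c)) + finrank K T := by
  obtain ⟨u, hu, hinf⟩ := exists_sup_span_range_add_inf_eq T U c
  exact ⟨u, hu, by rw [finrank_sup_span_range_add_add_finrank_sup hu, hinf]⟩

end Perturbation

theorem finrank_sup_ker_eq {K V W : Type*} [DivisionRing K] [AddCommGroup V] [Module K V]
    [FiniteDimensional K V] [AddCommGroup W] [Module K W] (f : V →ₗ[K] W) (Q : Submodule K V) :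
    finrank K ↥(Q ⊔ ker f) = finrank K ↥(Q.map f) + finrank K (ker f) := by
  have hmap : (Q ⊔ ker f).map f = Q.map f := by
    rw [← comap_map_eq, map_comap_eq, inf_of_le_right map_le_range]
  have h := (f.domRestrict (Q ⊔ ker f)).finrank_range_add_finrank_ker
  rwa [range_domRestrict, hmap, ker_domRestrict,
    (comapSubtypeEquivOfLe (le_sup_right : ker f ≤ Q ⊔ ker f)).finrank_eq, eq_comm] at h

section ColumnSpace

variable {R : Type*} [Semiring R] {α β γ δ : Type*}

def colSpan (M : Matrix α β R) : Submodule Rᵐᵒᵖ (α → R) := span Rᵐᵒᵖ (Set.range fun j i => M i j)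

theorem colSpan_fromCols (M : Matrix α β R) (N : Matrix α γ R) :
    colSpan (fromCols M N) = colSpan M ⊔ colSpan N := by
  have hcols : (fun j i => fromCols M N i j) = Sum.elim (fun j i => M i j) (fun j i => N i j) := by
    ext (j | j) i <;> rfl
  rw [colSpan, hcols, Set.Sum.elim_range, span_union]
  rfl

theorem map_funLeft_inr_colSpan_fromRows (M : Matrix α γ R) (N : Matrix β γ R) :
    (colSpan (fromRows M N)).map (funLeft Rᵐᵒᵖ R Sum.inr) = colSpan N := by
  rw [colSpan, Submodule.map_span, ← Set.range_comp]
  rfl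

theorem colSpan_fromRows_fromCols (Y : Matrix α γ R) (D : Matrix α δ R)
    (B : Matrix β γ R) (A : Matrix β δ R) :
    colSpan (fromRows (fromCols Y D) (fromCols B A)) = colSpan (fromRows D A) ⊔
      span Rᵐᵒᵖ (Set.range ((fun j i => fromRows 0 B i j) + fun j i => fromRows Y 0 i j)) := by
  have hcols : (fun j i => fromRows Y B i j) =
      (fun j i => fromRows 0 B i j) + fun j i => fromRows Y 0 i j := by
    ext j (i | i) <;> simp
  rw [fromRows_fromCols_eq_fromBlocks, ← fromCols_fromRows_eq_fromBlocks, colSpan_fromCols,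
    sup_comm, colSpan, colSpan, hcols]

theorem forall_mem_ker_funLeft_inr_iff (u : γ → α ⊕ β → R) :
    (∀ j, u j ∈ ker (funLeft Rᵐᵒᵖ R Sum.inr)) ↔
      ∃ Y : Matrix α γ R, (fun j i => fromRows Y 0 i j) = u := by
  refine ⟨fun hu => ⟨of fun i j => u j (Sum.inl i), ?_⟩, ?_⟩
  · ext j (i | i)
    · rfl
    · exact (congrFun (hu j) i).symm
  · rintro ⟨Y, rfl⟩ j
    ext i
    rfl

end ColumnSpace

instance inst_s5 : Module.Finite Hᵐᵒᵖ H := Module.Finite.equiv (MulOpposite.opLinearEquiv Hᵐᵒᵖ).symm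

theorem finrank_pi_quaternion (ι : Type) [Fintype ι] : finrank Hᵐᵒᵖ (ι → H) = Fintype.card ι := by
  rw [finrank_pi_fintype, (MulOpposite.opLinearEquiv Hᵐᵒᵖ).finrank_eq, finrank_self]
  simp

theorem finrank_ker_funLeft_inr (α β : Type) [Fintype α] [Fintype β] :
    finrank Hᵐᵒᵖ (ker (funLeft Hᵐᵒᵖ H (Sum.inr : β → α ⊕ β))) = Fintype.card α := by
  have h := (funLeft Hᵐᵒᵖ H (Sum.inr : β → α ⊕ β)).finrank_range_add_finrank_ker
  rw [range_eq_top.mpr (funLeft_surjective_of_injective _ _ _ Sum.inr_injective), finrank_top,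
    finrank_pi_quaternion, finrank_pi_quaternion, Fintype.card_sum] at h
  omega

theorem finrank_colSpan_fromRows_sup_ker {α β γ : Type} [Fintype α] [Fintype β] [Fintype γ]
    (D : Matrix α γ H) (A : Matrix β γ H) :
    finrank Hᵐᵒᵖ ↥(colSpan (fromRows D A) ⊔ ker (funLeft Hᵐᵒᵖ H (Sum.inr : β → α ⊕ β))) =
      rk A + Fintype.card α := by
  rw [finrank_sup_ker_eq, map_funLeft_inr_colSpan_fromRows, finrank_ker_funLeft_inr]
  rfl

theorem stmt_5 {p q n m : ℕ}
    (A1 : Matrix (Fin p) (Fin q) H) (B1 : Matrix (Fin p) (Fin m) H)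
    (D1 : Matrix (Fin n) (Fin q) H) :
    ((∃ (Y : Matrix (Fin n) (Fin m) H), (rk (Matrix.fromRows (Matrix.fromCols Y D1) (Matrix.fromCols B1 A1)) : ℤ) = (min (((n : ℤ)) + ((rk (Matrix.fromCols B1 A1) : ℤ))) (((m : ℤ)) + ((rk (Matrix.fromRows D1 A1) : ℤ))))) ∧
      (∀ (Y : Matrix (Fin n) (Fin m) H), (rk (Matrix.fromRows (Matrix.fromCols Y D1) (Matrix.fromCols B1 A1)) : ℤ) ≤ (min (((n : ℤ)) + ((rk (Matrix.fromCols B1 A1) : ℤ))) (((m : ℤ)) + ((rk (Matrix.fromRows D1 A1) : ℤ)))))) ∧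
    ((∃ (Y : Matrix (Fin n) (Fin m) H), (rk (Matrix.fromRows (Matrix.fromCols Y D1) (Matrix.fromCols B1 A1)) : ℤ) = (((rk (Matrix.fromCols B1 A1) : ℤ)) + ((rk (Matrix.fromRows D1 A1) : ℤ)) - ((rk A1 : ℤ)))) ∧
      (∀ (Y : Matrix (Fin n) (Fin m) H), (((rk (Matrix.fromCols B1 A1) : ℤ)) + ((rk (Matrix.fromRows D1 A1) : ℤ)) - ((rk A1 : ℤ))) ≤ (rk (Matrix.fromRows (Matrix.fromCols Y D1) (Matrix.fromCols B1 A1)) : ℤ))) := by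
  set f := funLeft Hᵐᵒᵖ H (Sum.inr : Fin p → Fin n ⊕ Fin p)
  set T := colSpan (fromRows D1 A1)
  set c : Fin m → Fin n ⊕ Fin p → H := fun j i => fromRows 0 B1 i j
  have hrk : ∀ Y : Matrix (Fin n) (Fin m) H, rk (fromRows (fromCols Y D1) (fromCols B1 A1)) =
      finrank Hᵐᵒᵖ ↥(T ⊔ span Hᵐᵒᵖ (Set.range (c + fun j i => fromRows Y 0 i j))) :=
    fun Y => by rw [← colSpan_fromRows_fromCols]; rfl
  have hmem : ∀ Y : Matrix (Fin n) (Fin m) H, ∀ j, (fun i => fromRows Y 0 i j) ∈ ker f :=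
    fun Y => (forall_mem_ker_funLeft_inr_iff _).mpr ⟨Y, rfl⟩
  have hTU : finrank Hᵐᵒᵖ ↥(T ⊔ ker f) = rk A1 + n := by
    simpa using finrank_colSpan_fromRows_sup_ker D1 A1
  have hTUc : finrank Hᵐᵒᵖ ↥(T ⊔ ker f ⊔ span Hᵐᵒᵖ (Set.range c)) = rk (fromCols B1 A1) + n := by
    have h := finrank_colSpan_fromRows_sup_ker (fromCols 0 D1) (fromCols B1 A1)
    rw [colSpan_fromRows_fromCols, fromRows_zero,
      show (fun j i => (0 : Matrix _ _ H) i j) = 0 from rfl, add_zero, sup_right_comm,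
      Fintype.card_fin] at h
    exact h
  have hT : finrank Hᵐᵒᵖ T = rk (fromRows D1 A1) := rfl
  refine ⟨⟨?_, fun Y => ?_⟩, ?_, fun Y => ?_⟩
  · obtain ⟨u, hu, hmax⟩ := exists_finrank_sup_span_range_add_eq_min T (ker f) c
    obtain ⟨Y, rfl⟩ := (forall_mem_ker_funLeft_inr_iff u).mp hu
    refine ⟨Y, ?_⟩
    rw [hrk, hmax, hTUc, hT]
    omega
  · have := finrank_sup_span_range_add_le (T := T) (c := c) (hmem Y)
    rw [← hrk, hTUc, hT] at this
    omega
  · obtain ⟨u, hu, hmin⟩ := exists_finrank_sup_span_range_add_add_finrank_sup_eq T (ker f) c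
    obtain ⟨Y, rfl⟩ := (forall_mem_ker_funLeft_inr_iff u).mp hu
    refine ⟨Y, ?_⟩
    rw [← hrk, hTU, hTUc, hT] at hmin
    omega
  · have := finrank_sup_add_finrank_le_finrank_sup_span_range_add (T := T) (c := c) (hmem Y)
    rw [← hrk, hTU, hTUc, hT] at this
    omega
end

section
/- If there exist quaternion matrices X ∈ ℍ^{p1×q1}, Y ∈ ℍ^{p2×q2}, Z ∈ ℍ^{p3×q3} such that BXE + CYF + DZG = A, then r([A B C D; E 0 0 0; F 0 0 0; G 0 0 0]) = r([B C D]) + r([E; F; G]). -/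
open Matrix

/-!
Write `B' = [B C D]`, `E' = [E; F; G]` and `W = diag(X, Y, Z)`, so that `A = B' W E'`. Up to a
reordering of rows and columns the matrix is `[A B'; E' 0] = [0 B'; E' 0] * [1 0; W E' 1]`, and
the right factor is invertible, so the column space is that of `[0 B'; E' 0]`. The columns of
the latter split into those of `B'` placed on top and those of `E'` placed below, so its column
space is the product of the column spaces of `B'` and `E'`.
-/

theorem Submodule.finrank_prod {K V W : Type*} [DivisionRing K] [AddCommGroup V] [Module K V]
    [AddCommGroup W] [Module K W] (p : Submodule K V) (q : Submodule K W)
    [FiniteDimensional K p] [FiniteDimensional K q] :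
    Module.finrank K (p.prod q) = Module.finrank K p + Module.finrank K q := by
  rw [← p.range_subtype, ← q.range_subtype, ← LinearMap.range_prodMap,
    LinearMap.finrank_range_of_inj (p.injective_subtype.prodMap q.injective_subtype),
    Module.finrank_prod, p.range_subtype, q.range_subtype]

namespace Matrix

variable {R : Type*} {l m n o : Type*}

section Semiring

variable [Semiring R]

def colSpan (M : Matrix m n R) : Submodule Rᵐᵒᵖ (m → R) :=
  Submodule.span Rᵐᵒᵖ (Set.range fun j i => M i j)

theorem col_mul_eq_sum [Fintype n] (M : Matrix m n R) (P : Matrix n o R) (j : o) :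
    (fun i => (M * P) i j) = ∑ k, MulOpposite.op (P k j) • fun i => M i k := by
  funext i
  simp [mul_apply, Finset.sum_apply, MulOpposite.smul_eq_mul_unop]

theorem colSpan_mul_le [Fintype n] (M : Matrix m n R) (P : Matrix n o R) :
    colSpan (M * P) ≤ colSpan M := by
  refine Submodule.span_le.2 ?_
  rintro _ ⟨j, rfl⟩
  change (fun i => (M * P) i j) ∈ colSpan M
  rw [col_mul_eq_sum]
  exact Submodule.sum_mem _ fun k _ => Submodule.smul_mem _ _ (Submodule.subset_span ⟨k, rfl⟩)

theorem colSpan_mul_of_mul_eq_one [Fintype n] [DecidableEq n] (M : Matrix m n R)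
    {P Q : Matrix n n R} (hPQ : P * Q = 1) : colSpan (M * P) = colSpan M :=
  (colSpan_mul_le M P).antisymm <| by
    simpa [Matrix.mul_assoc, hPQ] using colSpan_mul_le (M * P) Q

theorem colSpan_submatrix (M : Matrix m n R) (e : l ≃ m) (f : o ≃ n) :
    colSpan (M.submatrix e f) =
      (colSpan M).map (LinearEquiv.funCongrLeft Rᵐᵒᵖ R e).toLinearMap := by
  rw [colSpan, colSpan, Submodule.map_span, ← Set.range_comp, ← f.surjective.range_comp]
  rfl

theorem colSpan_fromBlocks_zero_zero (B : Matrix m o R) (E : Matrix l n R) :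
    (colSpan (fromBlocks 0 B E 0)).map
        (LinearEquiv.sumArrowLequivProdArrow m l Rᵐᵒᵖ R).toLinearMap =
      (colSpan B).prod (colSpan E) := by
  have hcols :
      (LinearEquiv.sumArrowLequivProdArrow m l Rᵐᵒᵖ R ∘ fun j i => fromBlocks 0 B E 0 i j) =
        Sum.elim (LinearMap.inr Rᵐᵒᵖ _ _ ∘ fun j i => E i j)
          (LinearMap.inl Rᵐᵒᵖ _ _ ∘ fun k i => B i k) := by
    funext j
    rcases j with j | k <;> ext i <;> rfl
  rw [colSpan, Submodule.map_span, ← Set.range_comp, LinearEquiv.coe_coe, hcols,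
    Set.Sum.elim_range, Set.union_comm, Set.range_comp, Set.range_comp,
    LinearMap.span_inl_union_inr]
  rfl

theorem fromCols_mul_fromBlocks_zero_zero_mul_fromRows {m₁ m₂ n₁ n₂ : Type*} [Fintype m₁]
    [Fintype m₂] [Fintype n₁] [Fintype n₂] (B : Matrix l m₁ R) (C : Matrix l m₂ R)
    (X : Matrix m₁ n₁ R) (Y : Matrix m₂ n₂ R) (E : Matrix n₁ n R) (F : Matrix n₂ n R) :
    fromCols B C * fromBlocks X 0 0 Y * fromRows E F = B * X * E + C * Y * F := by
  rw [fromCols_mul_fromBlocks, fromCols_mul_fromRows]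
  simp only [Matrix.mul_zero, add_zero, zero_add]

end Semiring

section Ring

variable [Ring R] [Fintype n] [Fintype o] [DecidableEq n] [DecidableEq o]

theorem fromBlocks_one_zero_mul_fromBlocks_one_zero_neg (X : Matrix o n R) :
    fromBlocks 1 (0 : Matrix n o R) X 1 * fromBlocks 1 0 (-X) 1 = 1 := by
  simp [fromBlocks_multiply, fromBlocks_one]

theorem colSpan_fromBlocks_of_eq_mul_mul [Fintype l] {A : Matrix m n R} {B : Matrix m o R}
    {E : Matrix l n R} {W : Matrix o l R} (hA : A = B * W * E) :
    colSpan (fromBlocks A B E 0) = colSpan (fromBlocks 0 B E 0) := by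
  have hfactor :
      fromBlocks A B E 0 = fromBlocks 0 B E 0 * fromBlocks 1 (0 : Matrix n o R) (W * E) 1 := by
    rw [fromBlocks_multiply]
    simp [hA, Matrix.mul_assoc]
  rw [hfactor, colSpan_mul_of_mul_eq_one _ (fromBlocks_one_zero_mul_fromBlocks_one_zero_neg _)]

end Ring

section DivisionRing

variable {K : Type*} [DivisionRing K]

instance [Finite n] (M : Matrix m n K) : FiniteDimensional Kᵐᵒᵖ (colSpan M) :=
  FiniteDimensional.span_of_finite _ (Set.finite_range _)

theorem finrank_colSpan_submatrix (M : Matrix m n K) (e : l ≃ m) (f : o ≃ n) :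
    Module.finrank Kᵐᵒᵖ (colSpan (M.submatrix e f)) = Module.finrank Kᵐᵒᵖ (colSpan M) := by
  rw [colSpan_submatrix, LinearEquiv.finrank_map_eq]

theorem finrank_colSpan_fromBlocks_zero_zero [Finite n] [Finite o] (B : Matrix m o K)
    (E : Matrix l n K) :
    Module.finrank Kᵐᵒᵖ (colSpan (fromBlocks 0 B E 0)) =
      Module.finrank Kᵐᵒᵖ (colSpan B) + Module.finrank Kᵐᵒᵖ (colSpan E) := by
  rw [← LinearEquiv.finrank_map_eq (LinearEquiv.sumArrowLequivProdArrow m l Kᵐᵒᵖ K),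
    colSpan_fromBlocks_zero_zero, Submodule.finrank_prod]

end DivisionRing

end Matrix

section Quaternion

variable {α β γ δ : Type} [Fintype α] [Fintype β] [Fintype γ] [Fintype δ]

theorem rk_eq_finrank_colSpan (M : Matrix α β H) : rk M = Module.finrank Hᵐᵒᵖ M.colSpan := rfl

theorem rk_submatrix (M : Matrix α β H) (e : γ ≃ α) (f : δ ≃ β) :
    rk (M.submatrix e f) = rk M :=
  finrank_colSpan_submatrix M e f

theorem rk_fromBlocks_of_eq_mul_mul {A : Matrix α β H} {B : Matrix α δ H} {E : Matrix γ β H}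
    {W : Matrix δ γ H} (hA : A = B * W * E) : rk (fromBlocks A B E 0) = rk B + rk E := by
  classical
  simp only [rk_eq_finrank_colSpan]
  rw [colSpan_fromBlocks_of_eq_mul_mul hA, finrank_colSpan_fromBlocks_zero_zero]

end Quaternion

theorem stmt_6 {m n p1 p2 p3 q1 q2 q3 : ℕ}
    (A : Matrix (Fin m) (Fin n) H) (B : Matrix (Fin m) (Fin p1) H)
    (C : Matrix (Fin m) (Fin p2) H) (D : Matrix (Fin m) (Fin p3) H)
    (E : Matrix (Fin q1) (Fin n) H) (F : Matrix (Fin q2) (Fin n) H)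
    (G : Matrix (Fin q3) (Fin n) H)
    (hcon : ∃ (X : Matrix (Fin p1) (Fin q1) H) (Y : Matrix (Fin p2) (Fin q2) H) (Z : Matrix (Fin p3) (Fin q3) H), B * X * E + C * Y * F + D * Z * G = A) :
    rk (Matrix.fromRows (Matrix.fromRows (Matrix.fromRows (Matrix.fromCols (Matrix.fromCols (Matrix.fromCols A B) C) D) (Matrix.fromCols (Matrix.fromCols (Matrix.fromCols E (0 : Matrix (Fin q1) (Fin p1) H)) (0 : Matrix (Fin q1) (Fin p2) H)) (0 : Matrix (Fin q1) (Fin p3) H))) (Matrix.fromCols (Matrix.fromCols (Matrix.fromCols F (0 : Matrix (Fin q2) (Fin p1) H)) (0 : Matrix (Fin q2) (Fin p2) H)) (0 : Matrix (Fin q2) (Fin p3) H))) (Matrix.fromCols (Matrix.fromCols (Matrix.fromCols G (0 : Matrix (Fin q3) (Fin p1) H)) (0 : Matrix (Fin q3) (Fin p2) H)) (0 : Matrix (Fin q3) (Fin p3) H))) = rk (Matrix.fromCols (Matrix.fromCols B C) D) + rk (Matrix.fromRows (Matrix.fromRows E F) G) := by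
  obtain ⟨X, Y, Z, hXYZ⟩ := hcon
  have hA : A = fromCols (fromCols B C) D * fromBlocks (fromBlocks X 0 0 Y) 0 0 Z *
      fromRows (fromRows E F) G := by
    rw [fromCols_mul_fromBlocks_zero_zero_mul_fromRows,
      fromCols_mul_fromBlocks_zero_zero_mul_fromRows, hXYZ]
  let e {a b c d : Type} : ((a ⊕ b) ⊕ c) ⊕ d ≃ a ⊕ ((b ⊕ c) ⊕ d) :=
    (Equiv.sumCongr (Equiv.sumAssoc a b c) (Equiv.refl d)).trans (Equiv.sumAssoc a (b ⊕ c) d)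
  rw [← rk_fromBlocks_of_eq_mul_mul hA, ← rk_submatrix _ e e]
  congr 1
  ext (((i | i) | i) | i) (((j | j) | j) | j) <;> rfl
end
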